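/- Let O ⊆ ℝ² be a nonempty, compact, convex set, let r_a > 0 and ε_d > 0, and assume infDist 0 O > r_a + ε_d (the target at the origin lies strictly outside the (r_a + ε_d)-neighbourhood of the obstacle). Let Π(·, O) denote the metric projection onto O, let T := D_{r_a + ε_d}(O) \ interior(D_{r_a}(O)) be the tubular neighbourhood of O, and define the back region R_b := {q ∈ T : ⟪q, q − Π(q, O)⟫ ≤ 0}. Then R_b is nonempty, compact, and connected. -/

import Mathlib

open Metric
open scoped RealInnerProductSpace

/-- The dilated set `D_r(V)`: the Minkowski sum of `V` with the closed ball of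
radius `r` centered at the origin. -/
def dilated (V : Set (EuclideanSpace ℝ (Fin 2))) (r : ℝ) :
    Set (EuclideanSpace ℝ (Fin 2)) :=
  {x | ∃ v ∈ V, ∃ w : EuclideanSpace ℝ (Fin 2), ‖w‖ ≤ r ∧ x = v + w}

namespace BackRegAux

noncomputable section

local notation "E" => EuclideanSpace ℝ (Fin 2)

variable {O : Set (EuclideanSpace ℝ (Fin 2))}

theorem var_of_dist (hOconv : Convex ℝ O) {p q : E} (hp : p ∈ O)
    (h : ‖q - p‖ = infDist q O) : ∀ z ∈ O, ⟪q - p, z - p⟫ ≤ 0 := by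
  have h' : ‖q - p‖ = ⨅ w : O, ‖q - w‖ := by
    rw [h, infDist_eq_iInf]; simp only [dist_eq_norm]
  exact (norm_eq_iInf_iff_real_inner_le_zero hOconv hp).1 h'

theorem dist_of_var (hOne : O.Nonempty) (hOcomp : IsCompact O) {p q : E} (hp : p ∈ O)
    (h : ∀ z ∈ O, ⟪q - p, z - p⟫ ≤ 0) : ‖q - p‖ = infDist q O := by
  refine le_antisymm ?_ ?_
  · obtain ⟨z, hz, hdz⟩ := hOcomp.exists_infDist_eq_dist hOne q
    rw [hdz, dist_eq_norm]
    have key : ‖q - p‖ ^ 2 ≤ ‖q - z‖ ^ 2 := by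
      have e : q - z = (q - p) + (p - z) := by abel
      rw [e, norm_add_sq_real]
      have h2 : ⟪q - p, p - z⟫ = -⟪q - p, z - p⟫ := by
        rw [show p - z = -(z - p) from by abel, inner_neg_right]
      nlinarith [h z hz, sq_nonneg ‖p - z‖]
    nlinarith [norm_nonneg (q - p), norm_nonneg (q - z)]
  · rw [← dist_eq_norm]
    exact infDist_le_dist_of_mem hp

theorem proj_unique {p p' q : E} (hp : p ∈ O) (hp' : p' ∈ O)
    (h : ∀ z ∈ O, ⟪q - p, z - p⟫ ≤ 0) (h' : ∀ z ∈ O, ⟪q - p', z - p'⟫ ≤ 0) : p = p' := by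
  have h1 := h p' hp'
  have h2 := h' p hp
  have e1 : ⟪p' - p, p' - p⟫ = ⟪q - p, p' - p⟫ - ⟪q - p', p' - p⟫ := by
    rw [← inner_sub_left]; congr 1; abel
  have e2 : ⟪q - p', p - p'⟫ = -⟪q - p', p' - p⟫ := by
    rw [show p - p' = -(p' - p) from by abel, inner_neg_right]
  have hkey : ⟪p' - p, p' - p⟫ ≤ 0 := by linarith
  have := real_inner_self_nonpos.1 hkey
  have h3 : p' = p := by rwa [sub_eq_zero] at this
  exact h3.symm

theorem infDist_ray (hOne : O.Nonempty) (hOcomp : IsCompact O) {p u : E} (hp : p ∈ O)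
    (hu : ‖u‖ = 1) (hvar : ∀ z ∈ O, ⟪u, z - p⟫ ≤ 0) {t : ℝ} (ht : 0 ≤ t) :
    infDist (p + t • u) O = t := by
  have h : ∀ z ∈ O, ⟪(p + t • u) - p, z - p⟫ ≤ 0 := by
    intro z hz
    rw [show (p + t • u) - p = t • u from by abel, real_inner_smul_left]
    exact mul_nonpos_iff.2 (Or.inl ⟨ht, hvar z hz⟩)
  have hd := dist_of_var hOne hOcomp hp h
  rw [← hd, show (p + t • u) - p = t • u from by abel, norm_smul, hu,
    Real.norm_eq_abs, abs_of_nonneg ht, mul_one]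

end

end BackRegAux

open BackRegAux

local notation "E2" => EuclideanSpace ℝ (Fin 2)

set_option maxHeartbeats 2000000 in
/-- Remark 1 of the paper: the back region
`R_b = {q ∈ T(O) | ⟪q, q - Π(q, O)⟫ ≤ 0}` of the tubular neighbourhood
`T(O) = D_{r_a + ε_d}(O) \ interior (D_{r_a}(O))` of a compact convex obstacle `O`
(with the target `0` strictly outside the `(r_a + ε_d)`-neighbourhood of `O`)
is a nonempty compact connected set. -/
theorem back_region_nonempty_compact_connected
    (O : Set (EuclideanSpace ℝ (Fin 2)))
    (hOne : O.Nonempty) (hOcomp : IsCompact O) (hOconv : Convex ℝ O)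
    (r_a ε_d : ℝ) (hra : 0 < r_a) (hεd : 0 < ε_d)
    (htarget : r_a + ε_d < infDist 0 O)
    (proj : EuclideanSpace ℝ (Fin 2) → EuclideanSpace ℝ (Fin 2))
    (hproj : ∀ q, proj q ∈ O ∧ ‖q - proj q‖ = infDist q O) :
    let T : Set (EuclideanSpace ℝ (Fin 2)) :=
      dilated O (r_a + ε_d) \ interior (dilated O r_a)
    let Rb : Set (EuclideanSpace ℝ (Fin 2)) :=
      {q ∈ T | ⟪q, q - proj q⟫ ≤ 0}
    Rb.Nonempty ∧ IsCompact Rb ∧ IsConnected Rb := by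
  intro T Rb
  classical
  -- basic variational facts
  have pvar : ∀ q : E2, ∀ z ∈ O, ⟪q - proj q, z - proj q⟫ ≤ 0 :=
    fun q => var_of_dist hOconv (hproj q).1 (hproj q).2
  have projray : ∀ (p u : E2) (c : ℝ), p ∈ O → ‖u‖ = 1 → (∀ z ∈ O, ⟪u, z - p⟫ ≤ 0) → 0 ≤ c →
      proj (p + c • u) = p := by
    intro p u c hp hun hvar hc
    have h2 : ∀ z ∈ O, ⟪(p + c • u) - p, z - p⟫ ≤ 0 := by
      intro z hz
      rw [show p + c • u - p = c • u from by abel, real_inner_smul_left]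
      exact mul_nonpos_iff.2 (Or.inl ⟨hc, hvar z hz⟩)
    exact proj_unique (hproj _).1 hp (pvar _) h2
  have mkray : ∀ x : E2, 0 < infDist x O →
      ‖(infDist x O)⁻¹ • (x - proj x)‖ = 1 ∧
      (∀ z ∈ O, ⟪(infDist x O)⁻¹ • (x - proj x), z - proj x⟫ ≤ 0) ∧
      x = proj x + infDist x O • ((infDist x O)⁻¹ • (x - proj x)) := by
    intro x hx
    have hnx : ‖x - proj x‖ = infDist x O := (hproj x).2
    refine ⟨?_, ?_, ?_⟩
    · rw [norm_smul, hnx, Real.norm_eq_abs, abs_of_pos (inv_pos.2 hx), inv_mul_cancel₀ hx.ne']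
    · intro z hz
      rw [real_inner_smul_left]
      exact mul_nonpos_iff.2 (Or.inl ⟨(inv_pos.2 hx).le, pvar x z hz⟩)
    · rw [smul_smul, mul_inv_cancel₀ hx.ne', one_smul]; abel
  have lowb : ∀ (x : E2) (c : ℝ), (∀ z ∈ O, c ≤ dist x z) → c ≤ infDist x O := by
    intro x c h
    obtain ⟨z, hz, hdz⟩ := hOcomp.exists_infDist_eq_dist hOne x
    rw [hdz]; exact h z hz
  have hdil : ∀ r : ℝ, 0 ≤ r → ∀ x : E2, x ∈ dilated O r ↔ infDist x O ≤ r := by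
    intro r hr x
    constructor
    · rintro ⟨v, hv, w, hw, rfl⟩
      calc infDist (v + w) O ≤ dist (v + w) v := infDist_le_dist_of_mem hv
        _ = ‖w‖ := by rw [dist_eq_norm]; congr 1; abel
        _ ≤ r := hw
    · intro h
      obtain ⟨v, hv, hdv⟩ := hOcomp.exists_infDist_eq_dist hOne x
      refine ⟨v, hv, x - v, ?_, by abel⟩
      rw [show ‖x - v‖ = dist x v from (dist_eq_norm x v).symm, ← hdv]
      exact h
  -- interior characterization
  have hintm : ∀ x : E2, x ∈ interior (dilated O r_a) ↔ infDist x O < r_a := by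
    intro x
    constructor
    · intro hx
      have hle : infDist x O ≤ r_a := (hdil r_a hra.le x).1 (interior_subset hx)
      rcases lt_or_eq_of_le hle with h | h
      · exact h
      · exfalso
        obtain ⟨ε, hε, hball⟩ := Metric.isOpen_iff.1 isOpen_interior x hx
        have hxpos : 0 < infDist x O := by rw [h]; exact hra
        obtain ⟨hun, hvar, hxe⟩ := mkray x hxpos
        rw [h] at hun hvar hxe
        have key : (x : E2) + (ε/2) • (r_a⁻¹ • (x - proj x))
            = proj x + (r_a + ε/2) • (r_a⁻¹ • (x - proj x)) := by
          have h1 : r_a • (r_a⁻¹ • (x - proj x)) = x - proj x := by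
            rw [smul_smul, mul_inv_cancel₀ hra.ne', one_smul]
          rw [add_smul, h1]; abel
        have hball' : (proj x + (r_a + ε/2) • (r_a⁻¹ • (x - proj x))) ∈ ball x ε := by
          rw [mem_ball, dist_eq_norm, ← key,
            show (x + (ε/2) • (r_a⁻¹ • (x - proj x))) - x = (ε/2) • (r_a⁻¹ • (x - proj x))
              from by abel, norm_smul, hun, Real.norm_eq_abs, abs_of_pos (by linarith), mul_one]
          linarith
        have hmem := (hdil r_a hra.le _).1 (interior_subset (hball hball'))
        rw [infDist_ray hOne hOcomp (hproj x).1 hun hvar (by linarith)] at hmem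
        linarith
    · intro hx
      have hsub : {y : E2 | infDist y O < r_a} ⊆ dilated O r_a :=
        fun y hy => (hdil _ hra.le y).2 (le_of_lt hy)
      have hopen : IsOpen {y : E2 | infDist y O < r_a} :=
        isOpen_lt (continuous_infDist_pt O) continuous_const
      exact interior_maximal hsub hopen hx
  -- the explicit set S
  set S : Set E2 := {q : E2 | (r_a ≤ infDist q O ∧ infDist q O ≤ r_a + ε_d) ∧ ⟪q, q - proj q⟫ ≤ 0}
    with hSdef
  have hRbS : Rb = S := by
    ext q
    show (q ∈ dilated O (r_a + ε_d) ∧ q ∉ interior (dilated O r_a)) ∧ ⟪q, q - proj q⟫ ≤ 0 ↔ _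
    rw [hdil (r_a + ε_d) (by linarith) q, hintm q]
    constructor
    · rintro ⟨⟨h1, h2⟩, h3⟩; exact ⟨⟨not_lt.1 h2, h1⟩, h3⟩
    · rintro ⟨⟨h1, h2⟩, h3⟩; exact ⟨⟨h2, not_lt.2 h1⟩, h3⟩
  -- continuity of proj
  have cproj : Continuous proj := by
    have hlip : LipschitzWith 1 proj := by
      apply LipschitzWith.of_dist_le_mul
      intro a b
      rw [NNReal.coe_one, one_mul, dist_eq_norm, dist_eq_norm]
      by_cases hab : proj a = proj b
      · rw [hab, sub_self, norm_zero]; exact norm_nonneg _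
      · have ha := pvar a (proj b) (hproj b).1
        have hb := pvar b (proj a) (hproj a).1
        have e1 : ⟪a - b, proj a - proj b⟫ - ⟪proj a - proj b, proj a - proj b⟫
            = ⟪(a - proj a) - (b - proj b), proj a - proj b⟫ := by
          rw [← inner_sub_left]; congr 1; abel
        have e2 : ⟪(a - proj a) - (b - proj b), proj a - proj b⟫
            = ⟪a - proj a, proj a - proj b⟫ - ⟪b - proj b, proj a - proj b⟫ :=
          inner_sub_left _ _ _
        have e3 : ⟪a - proj a, proj a - proj b⟫ = -⟪a - proj a, proj b - proj a⟫ := by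
          rw [show proj a - proj b = -(proj b - proj a) from by abel, inner_neg_right]
        have hself := real_inner_self_eq_norm_sq (proj a - proj b)
        have key : ‖proj a - proj b‖ ^ 2 ≤ ⟪a - b, proj a - proj b⟫ := by linarith
        have hcs := real_inner_le_norm (a - b) (proj a - proj b)
        have hcpos : 0 < ‖proj a - proj b‖ := norm_pos_iff.2 (sub_ne_zero.2 hab)
        nlinarith [norm_nonneg (a - b)]
    exact hlip.continuous
  -- generic membership in S for points on inner sphere / tube along outward normals
  have memS' : ∀ (p u : E2) (c : ℝ), p ∈ O → ‖u‖ = 1 → (∀ z ∈ O, ⟪u, z - p⟫ ≤ 0) →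
      r_a ≤ c → c ≤ r_a + ε_d → ⟪p + c • u, u⟫ ≤ 0 → p + c • u ∈ S := by
    intro p u c hp hun hvar hc1 hc2 hcond
    have hd : infDist (p + c • u) O = c :=
      infDist_ray hOne hOcomp hp hun hvar (le_trans hra.le hc1)
    have hpr : proj (p + c • u) = p := projray p u c hp hun hvar (le_trans hra.le hc1)
    refine ⟨⟨by rw [hd]; exact hc1, by rw [hd]; exact hc2⟩, ?_⟩
    rw [hpr, show p + c • u - p = c • u from by abel, real_inner_smul_right]
    exact mul_nonpos_iff.2 (Or.inl ⟨le_trans hra.le hc1, hcond⟩)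
  -- the base point q₀
  have hd₀pos : 0 < infDist (0 : E2) O := by linarith
  have hp₀O : proj (0 : E2) ∈ O := (hproj 0).1
  obtain ⟨hun0, hvar0, hxe0⟩ := mkray (0 : E2) hd₀pos
  set q₀ : E2 := proj (0 : E2) + r_a • ((infDist (0 : E2) O)⁻¹ • ((0 : E2) - proj (0 : E2)))
    with hq₀def
  have huu0 : ⟪(infDist (0 : E2) O)⁻¹ • ((0 : E2) - proj (0 : E2)),
      (infDist (0 : E2) O)⁻¹ • ((0 : E2) - proj (0 : E2))⟫ = 1 := by
    rw [real_inner_self_eq_norm_sq, hun0]; norm_num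
  have hq₀S : q₀ ∈ S := by
    apply memS' _ _ _ hp₀O hun0 hvar0 le_rfl (by linarith)
    have hnp : ‖proj (0 : E2)‖ = infDist (0 : E2) O := by
      rw [← (hproj 0).2, zero_sub, norm_neg]
    have hpu0 : ⟪proj (0 : E2), (infDist (0 : E2) O)⁻¹ • ((0 : E2) - proj (0 : E2))⟫
        = -infDist (0 : E2) O := by
      rw [real_inner_smul_right]
      have h1 : ⟪proj (0 : E2), (0 : E2) - proj (0 : E2)⟫ = -(‖proj (0 : E2)‖ ^ 2) := by
        rw [inner_sub_right, inner_zero_right, real_inner_self_eq_norm_sq]; ring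
      rw [h1, hnp]
      field_simp
    rw [inner_add_left, real_inner_smul_left, hpu0, huu0]
    nlinarith [htarget, hεd]
  -- step 1: radial path in S to the inner sphere
  have step1 : ∀ q ∈ S, ∃ q₁ ∈ S, infDist q₁ O = r_a ∧ JoinedIn S q q₁ := by
    intro q hq
    obtain ⟨⟨hq1, hq2⟩, hq3⟩ := hq
    have htpos : 0 < infDist q O := lt_of_lt_of_le hra hq1
    obtain ⟨hun, huvar, hxeq⟩ := mkray q htpos
    set t := infDist q O with htdef
    set p := proj q with hpdef
    set u := t⁻¹ • (q - p) with hudef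
    have hpO : p ∈ O := (hproj q).1
    have huu : ⟪u, u⟫ = 1 := by rw [real_inner_self_eq_norm_sq, hun]; norm_num
    have hqp : q - p = t • u := by rw [hudef, smul_smul, mul_inv_cancel₀ htpos.ne', one_smul]
    have hpu : ⟪p, u⟫ ≤ -t := by
      have h3 := hq3
      rw [hqp, real_inner_smul_right] at h3
      have hqu : ⟪q, u⟫ = ⟪p, u⟫ + t := by
        rw [hxeq, inner_add_left, real_inner_smul_left, huu]; ring
      nlinarith [htpos]
    have hmem : ∀ s : ℝ, 0 ≤ s → s ≤ 1 → p + ((1 - s) * t + s * r_a) • u ∈ S := by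
      intro s hs0 hs1
      apply memS' p u _ hpO hun huvar
      · nlinarith [hq1]
      · nlinarith [hq1, hq2]
      · rw [inner_add_left, real_inner_smul_left, huu]
        nlinarith [hq1, hpu]
    refine ⟨p + r_a • u, ?_, ?_, ?_⟩
    · have := hmem 1 zero_le_one le_rfl
      simpa using this
    · exact infDist_ray hOne hOcomp hpO hun huvar hra.le
    · have hcont : Continuous fun s : ℝ => p + ((1 - s) * t + s * r_a) • u := by
        apply continuous_const.add
        exact (((continuous_const.sub continuous_id).mul continuous_const).add
          (continuous_id.mul continuous_const)).smul continuous_const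
      refine ⟨⟨⟨fun s : unitInterval => p + ((1 - (s : ℝ)) * t + (s : ℝ) * r_a) • u,
        hcont.comp continuous_subtype_val⟩, ?_, ?_⟩, ?_⟩
      · show p + ((1 - ((0 : unitInterval) : ℝ)) * t + ((0 : unitInterval) : ℝ) * r_a) • u = q
        rw [hxeq]; norm_num
      · show p + ((1 - ((1 : unitInterval) : ℝ)) * t + ((1 : unitInterval) : ℝ) * r_a) • u
          = p + r_a • u
        norm_num
      · intro s
        exact hmem (s : ℝ) s.2.1 s.2.2
  -- step 2: path along the inner sphere to the base point q₀
  have step2 : ∀ q₁ ∈ S, infDist q₁ O = r_a → JoinedIn S q₁ q₀ := by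
    intro q₁ hq₁S hq₁d
    obtain ⟨⟨hq₁a, hq₁b⟩, hq₁3⟩ := id hq₁S
    have hp₁O : proj q₁ ∈ O := (hproj q₁).1
    have hnq₁ : ‖q₁ - proj q₁‖ = r_a := by rw [(hproj q₁).2, hq₁d]
    set p₁ := proj q₁ with hp₁def
    set u₁ := r_a⁻¹ • (q₁ - p₁) with hu₁def
    have hun1 : ‖u₁‖ = 1 := by
      rw [hu₁def, norm_smul, hnq₁, Real.norm_eq_abs, abs_of_pos (inv_pos.2 hra),
        inv_mul_cancel₀ hra.ne']
    have huu1 : ⟪u₁, u₁⟫ = 1 := by rw [real_inner_self_eq_norm_sq, hun1]; norm_num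
    have e2u : q₁ - p₁ = r_a • u₁ := by
      rw [hu₁def, smul_smul, mul_inv_cancel₀ hra.ne', one_smul]
    have hvar1 : ∀ z ∈ O, ⟪u₁, z - p₁⟫ ≤ 0 := by
      intro z hz
      rw [hu₁def, real_inner_smul_left]
      exact mul_nonpos_iff.2 (Or.inl ⟨(inv_pos.2 hra).le, pvar q₁ z hz⟩)
    have hq₁u : ⟪q₁, u₁⟫ ≤ 0 := by
      have h := hq₁3
      rw [e2u, real_inner_smul_right] at h
      nlinarith [hra]
    -- lower bound for the distance along the segment towards the origin
    have hds : ∀ s : ℝ, 0 ≤ s → r_a ≤ infDist ((1 - s) • q₁) O := by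
      intro s hs
      apply lowb
      intro z hz
      have e : ((1 - s) • q₁ : E2) - z = (-s) • q₁ + (q₁ - p₁) + (-(1 : ℝ)) • (z - p₁) := by
        module
      have h1 : ⟪((1 - s) • q₁ : E2) - z, u₁⟫
          = (-s) * ⟪q₁, u₁⟫ + r_a * ⟪u₁, u₁⟫ + (-1 : ℝ) * ⟪z - p₁, u₁⟫ := by
        rw [e, inner_add_left, inner_add_left, real_inner_smul_left, real_inner_smul_left,
          e2u, real_inner_smul_left]
      rw [huu1] at h1
      have h2 : ⟪z - p₁, u₁⟫ ≤ 0 := by rw [real_inner_comm]; exact hvar1 z hz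
      have h3 := real_inner_le_norm (((1 - s) • q₁ : E2) - z) u₁
      rw [hun1, mul_one] at h3
      rw [dist_eq_norm]
      have h4 : 0 ≤ (-s) * ⟪q₁, u₁⟫ := by nlinarith [hq₁u, hs]
      nlinarith
    -- the path function and its endpoint values
    have hsrc : proj ((1 - (0 : ℝ)) • q₁) + r_a • ((infDist ((1 - (0 : ℝ)) • q₁) O)⁻¹ •
        ((1 - (0 : ℝ)) • q₁ - proj ((1 - (0 : ℝ)) • q₁))) = q₁ := by
      have h0 : ((1 - (0 : ℝ)) • q₁ : E2) = q₁ := by norm_num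
      rw [h0, hq₁d, smul_smul, mul_inv_cancel₀ hra.ne', one_smul]
      abel
    have htgt : proj ((1 - (1 : ℝ)) • q₁) + r_a • ((infDist ((1 - (1 : ℝ)) • q₁) O)⁻¹ •
        ((1 - (1 : ℝ)) • q₁ - proj ((1 - (1 : ℝ)) • q₁))) = q₀ := by
      have h1 : ((1 - (1 : ℝ)) • q₁ : E2) = 0 := by norm_num
      rw [h1, hq₀def]
    -- membership of each path point
    have hmem2 : ∀ s : ℝ, 0 ≤ s → s ≤ 1 →
        proj ((1 - s) • q₁) + r_a • ((infDist ((1 - s) • q₁) O)⁻¹ •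
          ((1 - s) • q₁ - proj ((1 - s) • q₁))) ∈ S := by
      intro s hs0 hs1
      by_cases h0 : s = 0
      · rw [h0, hsrc]; exact hq₁S
      · have hspos : 0 < s := lt_of_le_of_ne hs0 (Ne.symm h0)
        have hdx : r_a ≤ infDist ((1 - s) • q₁ : E2) O := hds s hs0
        have hdxpos : 0 < infDist ((1 - s) • q₁ : E2) O := lt_of_lt_of_le hra hdx
        obtain ⟨hvn, hvvar, hxe⟩ := mkray _ hdxpos
        have hpxO : proj ((1 - s) • q₁ : E2) ∈ O := (hproj _).1
        set x := ((1 - s) • q₁ : E2) with hxdef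
        set tx := infDist x O with htxdef
        set px := proj x with hpxdef
        set v := tx⁻¹ • (x - px) with hvdef
        clear_value v px tx x
        have hvv : ⟪v, v⟫ = 1 := by rw [real_inner_self_eq_norm_sq, hvn]; norm_num
        apply memS' px v r_a hpxO hvn hvvar le_rfl (by linarith)
        -- the inner-product condition ⟪px + r_a • v, v⟫ ≤ 0
        have hxv : x - px = tx • v := by
          rw [hvdef, smul_smul, mul_inv_cancel₀ hdxpos.ne', one_smul]
        have hA : ⟪q₁ - p₁, v⟫ ≤ r_a := by
          rw [e2u, real_inner_smul_left]
          have hcs := real_inner_le_norm u₁ v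
          rw [hun1, hvn, one_mul] at hcs
          nlinarith [hra]
        have hB : ⟪p₁ - px, v⟫ ≤ 0 := by
          have h := hvvar p₁ hp₁O
          rwa [real_inner_comm] at h
        have hAB : ⟪q₁ - (px + r_a • v), v⟫ ≤ 0 := by
          have e : q₁ - (px + r_a • v) = (q₁ - p₁) + (p₁ - px) + (-r_a) • v := by module
          rw [e, inner_add_left, inner_add_left, real_inner_smul_left, hvv]
          linarith
        have hq1v : ⟪q₁, v⟫ ≤ ⟪px + r_a • v, v⟫ := by
          have e : ⟪q₁ - (px + r_a • v), v⟫ = ⟪q₁, v⟫ - ⟪px + r_a • v, v⟫ :=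
            inner_sub_left _ _ _
          linarith
        have hBB : ⟪px + r_a • v, v⟫ = (1 - s) * ⟪q₁, v⟫ - (tx - r_a) := by
          have e : (px + r_a • v : E2) = x + (r_a - tx) • v := by
            rw [hxe]; module
          rw [e, inner_add_left, real_inner_smul_left, hvv, hxdef, real_inner_smul_left]
          ring
        have hprod : 0 ≤ (1 - s) * (⟪px + r_a • v, v⟫ - ⟪q₁, v⟫) :=
          mul_nonneg (by linarith) (by linarith)
        nlinarith [hdx, hspos]
    -- continuity
    have hc1 : Continuous fun s : ℝ => ((1 - s) • q₁ : E2) :=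
      (continuous_const.sub continuous_id).smul continuous_const
    have hcI : Continuous fun s : unitInterval => ((1 - (s : ℝ)) • q₁ : E2) :=
      hc1.comp continuous_subtype_val
    have hcd : Continuous fun s : unitInterval => infDist ((1 - (s : ℝ)) • q₁ : E2) O :=
      (continuous_infDist_pt O).comp hcI
    have hcinv : Continuous fun s : unitInterval =>
        (infDist ((1 - (s : ℝ)) • q₁ : E2) O)⁻¹ :=
      hcd.inv₀ fun s => (lt_of_lt_of_le hra (hds (s : ℝ) s.2.1)).ne'
    have hcp : Continuous fun s : unitInterval => proj ((1 - (s : ℝ)) • q₁ : E2) :=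
      cproj.comp hcI
    have hcpath : Continuous fun s : unitInterval =>
        proj ((1 - (s : ℝ)) • q₁) + r_a • ((infDist ((1 - (s : ℝ)) • q₁) O)⁻¹ •
          ((1 - (s : ℝ)) • q₁ - proj ((1 - (s : ℝ)) • q₁))) := by
      exact hcp.add (((continuous_const : Continuous fun _ : unitInterval => r_a).smul
        (hcinv.smul (hcI.sub hcp))))
    refine ⟨⟨⟨fun s : unitInterval =>
      proj ((1 - (s : ℝ)) • q₁) + r_a • ((infDist ((1 - (s : ℝ)) • q₁) O)⁻¹ •
        ((1 - (s : ℝ)) • q₁ - proj ((1 - (s : ℝ)) • q₁))), hcpath⟩, ?_, ?_⟩, ?_⟩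
    · show proj ((1 - ((0 : unitInterval) : ℝ)) • q₁) + _ = q₁
      simpa using hsrc
    · show proj ((1 - ((1 : unitInterval) : ℝ)) • q₁) + _ = q₀
      simpa using htgt
    · intro s
      exact hmem2 (s : ℝ) s.2.1 s.2.2
  -- assemble
  have hpc : IsPathConnected S := by
    refine ⟨q₀, hq₀S, ?_⟩
    intro y hy
    obtain ⟨y₁, hy₁S, hy₁d, hjoin1⟩ := step1 y hy
    exact (hjoin1.trans (step2 y₁ hy₁S hy₁d)).symm
  obtain ⟨z₀, hz₀⟩ := hOne
  have hbdd : Bornology.IsBounded S := by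
    apply (Metric.isBounded_closedBall (x := z₀) (r := r_a + ε_d + Metric.diam O)).subset
    intro x hx
    have h := dist_le_infDist_add_diam (x := x) hOcomp.isBounded hz₀
    have := hx.1.2
    exact Metric.mem_closedBall.2 (by linarith)
  have hclosed : IsClosed S := by
    have c1 : Continuous fun q : E2 => infDist q O := continuous_infDist_pt O
    have c2 : Continuous fun q : E2 => ⟪q, q - proj q⟫ :=
      continuous_id.inner (continuous_id.sub cproj)
    have hSeq : S = (fun q : E2 => infDist q O) ⁻¹' Set.Icc r_a (r_a + ε_d) ∩
        (fun q : E2 => ⟪q, q - proj q⟫) ⁻¹' Set.Iic 0 := by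
      ext q
      simp [hSdef, Set.mem_Icc, Set.mem_Iic]
    rw [hSeq]
    exact (isClosed_Icc.preimage c1).inter (isClosed_Iic.preimage c2)
  have hcompact : IsCompact S := Metric.isCompact_of_isClosed_isBounded hclosed hbdd
  rw [hRbS]
  exact ⟨⟨q₀, hq₀S⟩, hcompact, hpc.isConnected⟩
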